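/- arXiv:2501.04113 — 2 statements merged into one kernel-verified Lean document; each statement's English description precedes it below -/
import Mathlib

section
/- Let R be a commutative ring, W a finite group acting on R by ring automorphisms, and suppose R is free of rank |W| over the invariant ring R^W with a basis (e_w)_{w ∈ W} such that det(v(e_w))_{v,w ∈ W} is a nonzerodivisor. Then the natural map R ⊗_{R^W} R → ∏_{w ∈ W} R, x ⊗ y ↦ (x · w(y))_w, is injective; in particular Spec(R ×_{Spec R^W} Spec R) contains the union of graphs of all w ∈ W as a closed subscheme whose ideal consists of nilpotents killed by the determinant condition, and if R is reduced and the determinant is a nonzerodivisor, R ⊗_{R^W} R is reduced. -/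
open scoped TensorProduct

/-- The invariant subring `R^W` of a ring `R` with an action of a group `W` by ring
automorphisms. -/
def invariantSubring (W R : Type*) [Group W] [CommRing R] [MulSemiringAction W R] :
    Subring R where
  carrier := {x : R | ∀ w : W, w • x = x}
  mul_mem' := fun hx hy w => by rw [smul_mul', hx w, hy w]
  add_mem' := fun hx hy w => by rw [smul_add, hx w, hy w]
  one_mem' := fun w => smul_one w
  zero_mem' := fun w => smul_zero w
  neg_mem' := fun hx w => by rw [smul_neg, hx w]

/-- The natural map `R ⊗_{R^W} R → ∏_{w ∈ W} R`, `x ⊗ y ↦ (x · w(y))_w`. -/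
noncomputable def tensorToPi (W R : Type*) [Group W] [CommRing R]
    [MulSemiringAction W R] :
    R ⊗[invariantSubring W R] R →ₗ[invariantSubring W R] (W → R) :=
  TensorProduct.lift <| LinearMap.mk₂ (invariantSubring W R)
    (fun x y => fun w => x * w • y)
    (fun x x' y => by funext w; simp [add_mul])
    (fun c x y => by
      funext w
      show (c • x) * w • y = c • (x * w • y)
      rw [Algebra.smul_def, Algebra.smul_def, mul_assoc])
    (fun x y y' => by funext w; simp [smul_add, mul_add])
    (fun c x y => by
      funext w
      show x * w • (c • y) = c • (x * w • y)
      rw [Algebra.smul_def, Algebra.smul_def]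
      show x * w • ((c : R) * y) = (c : R) * (x * w • y)
      rw [smul_mul', c.2 w]
      ring)

/-!
Over the left factor `R`, the module `R ⊗_{R^W} R` is free with basis `1 ⊗ e_w`, and in these
coordinates `x ⊗ y ↦ (x · v(y))_v` is multiplication by the matrix `(v(e_w))_{v,w}`. A square
matrix whose determinant is a nonzerodivisor acts injectively. Since the map is a ring
homomorphism into the reduced ring `∏_W R`, injectivity also gives reducedness.
-/

instance (W R : Type*) [Group W] [CommRing R] [MulSemiringAction W R] :
    SMulCommClass W (invariantSubring W R) R where
  smul_comm w c x := by
    change w • ((c : R) * x) = (c : R) * w • x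
    rw [smul_mul', c.2 w]

open scoped Matrix

namespace Algebra.TensorProduct

variable {S R ι κ : Type*} [CommRing S] [CommRing R] [Algebra S R]

noncomputable def twistedDiagonal (σ : ι → R →ₐ[S] R) : R ⊗[S] R →ₐ[S] (ι → R) :=
  productMap (AlgHom.pi fun _ => AlgHom.id S R) (AlgHom.pi σ)

@[simp]
lemma twistedDiagonal_tmul (σ : ι → R →ₐ[S] R) (x y : R) :
    twistedDiagonal σ (x ⊗ₜ y) = fun i => x * σ i y :=
  rfl

lemma twistedDiagonal_eq_mulVec_repr [Fintype κ] (σ : ι → R →ₐ[S] R) (b : Module.Basis κ S R)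
    (z : R ⊗[S] R) :
    twistedDiagonal σ z = (Matrix.of fun i j => σ i (b j)) *ᵥ (b.baseChange R).repr z := by
  induction z using TensorProduct.induction_on with
  | zero => simp
  | tmul x y =>
    ext i
    conv_lhs => rw [twistedDiagonal_tmul, ← b.sum_repr y]
    simp only [Algebra.smul_def, map_sum, map_mul, AlgHom.commutes, Finset.mul_sum, Matrix.mulVec,
      dotProduct, Matrix.of_apply, Module.Basis.baseChange_repr_tmul]
    exact Finset.sum_congr rfl fun _ _ => by ring
  | add z z' hz hz' => rw [map_add, map_add, hz, hz', Finsupp.coe_add, Matrix.mulVec_add]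

lemma twistedDiagonal_injective [Fintype ι] [DecidableEq ι] (σ : ι → R →ₐ[S] R)
    (b : Module.Basis ι S R) (hdet : (Matrix.of fun i j => σ i (b j)).det ∈ nonZeroDivisors R) :
    Function.Injective (twistedDiagonal σ) := by
  intro z z' h
  rw [twistedDiagonal_eq_mulVec_repr σ b, twistedDiagonal_eq_mulVec_repr σ b] at h
  exact (b.baseChange R).repr.injective
    (DFunLike.coe_injective (Matrix.mulVec_injective_of_det_mem_nonZeroDivisors hdet h))

end Algebra.TensorProduct

open Algebra.TensorProduct in
/-- (Pittie–Steinberg-type statement.)  Let `R` be a commutative ring with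
an action of a finite group `W` by ring automorphisms, and suppose `R` is free of rank
`|W|` over `R^W` with a basis `(e_w)_{w ∈ W}` such that `det (v(e_w))_{v,w}` is a
nonzerodivisor.  Then the natural map `R ⊗_{R^W} R → ∏_{w ∈ W} R`, `x ⊗ y ↦ (x · w(y))_w`
is injective — so `Spec (R ⊗_{R^W} R)` contains the union of the graphs of the elements of
`W` as a closed subscheme with nilpotent-free discrepancy — and if moreover `R` is
reduced, then `R ⊗_{R^W} R` is reduced. -/
theorem stmt11 {W R : Type*} [Group W] [Fintype W] [DecidableEq W] [CommRing R]
    [MulSemiringAction W R]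
    (e : W → R) (b : Module.Basis W (invariantSubring W R) R) (hb : ∀ w : W, b w = e w)
    (hdet : (Matrix.of fun v w : W => v • e w).det ∈ nonZeroDivisors R) :
    Function.Injective (tensorToPi W R) ∧
      (IsReduced R → IsReduced (R ⊗[invariantSubring W R] R)) := by
  set σ := MulSemiringAction.toAlgHom (invariantSubring W R) R (M := W)
  have hσ : tensorToPi W R = (twistedDiagonal σ).toLinearMap :=
    TensorProduct.ext' fun _ _ => rfl
  have hinj : Function.Injective (twistedDiagonal σ) :=
    twistedDiagonal_injective σ b (by simpa [σ, hb] using hdet)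
  exact ⟨by rw [hσ]; exact hinj, fun _ => isReduced_of_injective _ hinj⟩
end

section
/- Let β be a block in the transporter {w ∈ W : w·s' = s} with W_s° as in the block theory of a Coxeter group W (W_s° is a reflection subgroup which is a parabolic-type subgroup for the sub-root system Φ_s). Then β, with the Bruhat order induced from W, has a unique minimal element w_β and a unique maximal element w^β. -/
/-!
The sign `η w t = ±1` recording whether a reflection `t` is a right inversion of `w` comes from
a permutation representation of `W` on `W × ℤˣ`, and is therefore a cocycle:
`η (u * v) t = η v t * η u (v * t * v⁻¹)`. Dyer's theory of canonical generators shows that every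
`n ≠ 1` of a reflection subgroup `N` has a right inversion in `N`; with the cocycle identity this
makes the element of a coset `u N` with no right inversion in `N` unique, and likewise the element
having every reflection of `N` as a right inversion. Descending (resp. ascending, `W` being finite)
along reflections of `N` from any element of the coset reaches that element through a Bruhat
chain, so these two elements are the Bruhat minimum and maximum of the coset.
-/

def bruhatLE {B W : Type*} [Group W] {M : CoxeterMatrix B} (cs : CoxeterSystem M W) :
    W → W → Prop :=
  Relation.ReflTransGen
    (fun u v => ∃ t : W, cs.IsReflection t ∧ v = u * t ∧ cs.length u < cs.length v)

open Finset in
theorem pow_apply_eq_of_apply_eq_conj_mul {G A : Type*} [Group G] [CommMonoid A]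
    {F : Equiv.Perm (G × A)} {g : G} {f : G → A}
    (hF : ∀ p, F p = (g * p.1 * g⁻¹, f p.1 * p.2)) (k : ℕ) (p : G × A) :
    (F ^ k) p = (g ^ k * p.1 * (g ^ k)⁻¹,
      (∏ l ∈ range k, f (g ^ l * p.1 * (g ^ l)⁻¹)) * p.2) := by
  induction k generalizing p with
  | zero => simp
  | succ k ih =>
    rw [pow_succ, Equiv.Perm.mul_apply, hF, ih, prod_range_succ']
    simp only [pow_succ, mul_inv_rev, mul_assoc, pow_zero, one_mul, inv_one, mul_one]

theorem Finset.prod_range_two_mul {A : Type*} [CommMonoid A] (f : ℕ → A) (n : ℕ) :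
    ∏ k ∈ range (2 * n), f k = ∏ l ∈ range n, f (2 * l) * f (2 * l + 1) := by
  induction n with
  | zero => simp
  | succ n ih =>
    rw [Nat.mul_succ, prod_range_succ, prod_range_succ, prod_range_succ, ih, mul_assoc]

theorem conj_eq_iff_eq_conj {G : Type*} [Group G] {a x y : G} :
    a * x * a⁻¹ = y ↔ x = a⁻¹ * y * a := by
  constructor <;> rintro rfl <;> group

namespace CoxeterSystem

open Finset

variable {B W : Type*} [Group W] {M : CoxeterMatrix B} (cs : CoxeterSystem M W)

local prefix:100 "s" => cs.simple
local prefix:100 "π" => cs.wordProd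
local prefix:100 "ℓ" => cs.length

variable {cs} in
theorem IsReflection.conj_eq_iff {t x y : W} (ht : cs.IsReflection t) :
    t * x * t = y ↔ x = t * y * t := by
  simpa only [ht.inv] using conj_eq_iff_eq_conj (a := t) (x := x) (y := y)

section SignRepresentation

open Classical

noncomputable def simpleSignPerm (i : B) : Equiv.Perm (W × ℤˣ) :=
  Function.Involutive.toPerm (fun p => (s i * p.1 * s i, (if p.1 = s i then -1 else 1) * p.2))
    (fun p => by
      have h : s i * p.1 * s i = s i ↔ p.1 = s i := by
        rw [(cs.isReflection_simple i).conj_eq_iff, cs.simple_mul_simple_self, one_mul]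
      ext
      · simp [← mul_assoc]
      · by_cases hp : p.1 = s i <;> simp [h, hp])

theorem simpleSignPerm_apply (i : B) (p : W × ℤˣ) :
    cs.simpleSignPerm i p = (s i * p.1 * s i, (if p.1 = s i then -1 else 1) * p.2) := rfl

theorem isLiftable_simpleSignPerm : M.IsLiftable cs.simpleSignPerm := by
  intro i j
  set g := s i * s j
  set f : W → ℤˣ := fun t => (if s j * t * s j = s i then -1 else 1) * (if t = s j then -1 else 1)
  have hF : ∀ p, (cs.simpleSignPerm i * cs.simpleSignPerm j) p = (g * p.1 * g⁻¹, f p.1 * p.2) := by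
    intro p
    simp only [Equiv.Perm.mul_apply, simpleSignPerm_apply, f, g, mul_inv_rev, cs.inv_simple,
      mul_assoc]
  have hg : g ^ M i j = 1 := cs.simple_mul_simple_pow i j
  have hsemi : ∀ l : ℕ, (g ^ l)⁻¹ * s j = s j * g ^ l := by
    intro l
    rw [← inv_pow]
    refine (SemiconjBy.pow_right ?_ l).symm
    simp only [SemiconjBy, g, mul_inv_rev, cs.inv_simple, mul_assoc]
  ext p
  · simp [pow_apply_eq_of_apply_eq_conj_mul hF, hg]
  · -- the sign flips at `t = s j * g ^ k` for `k < 2 * M i j`; these points have period `M i j`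
    set A : ℕ → ℤˣ := fun k => if p.1 = s j * g ^ k then -1 else 1
    have hA : ∀ l, f (g ^ l * p.1 * (g ^ l)⁻¹) = A (2 * l) * A (2 * l + 1) := by
      intro l
      have h₀ : g ^ l * p.1 * (g ^ l)⁻¹ = s j ↔ p.1 = s j * g ^ (2 * l) := by
        rw [conj_eq_iff_eq_conj, hsemi, mul_assoc, ← pow_add, ← two_mul]
      have h₁ : s j * (g ^ l * p.1 * (g ^ l)⁻¹) * s j = s i ↔ p.1 = s j * g ^ (2 * l + 1) := by
        rw [(cs.isReflection_simple j).conj_eq_iff, conj_eq_iff_eq_conj, mul_assoc (s j),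
          ← mul_assoc, hsemi, mul_assoc, mul_assoc, ← pow_succ', ← pow_add,
          show l + (l + 1) = 2 * l + 1 by ring]
      simp only [f, A, h₀, h₁, mul_comm]
    have hper : ∀ k, A (M i j + k) = A k := fun k => by simp only [A, pow_add, hg, one_mul]
    have hprod : ∏ l ∈ range (M i j), f (g ^ l * p.1 * (g ^ l)⁻¹) = 1 := by
      rw [prod_congr rfl fun l _ => hA l, ← prod_range_two_mul, two_mul, prod_range_add]
      simp only [hper, Int.units_mul_self]
    simp [pow_apply_eq_of_apply_eq_conj_mul hF, hprod]

noncomputable def signRep : W →* Equiv.Perm (W × ℤˣ) :=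
  cs.lift ⟨cs.simpleSignPerm, cs.isLiftable_simpleSignPerm⟩

noncomputable def reflSign (w t : W) : ℤˣ := (cs.signRep w (t, 1)).2

theorem signRep_simple (i : B) : cs.signRep (s i) = cs.simpleSignPerm i :=
  cs.lift_apply_simple cs.isLiftable_simpleSignPerm i

theorem reflSign_simple (i : B) (t : W) : cs.reflSign (s i) t = if t = s i then -1 else 1 := by
  simp [reflSign, signRep_simple, simpleSignPerm_apply]

end SignRepresentation

local notation "η" => cs.reflSign

theorem signRep_apply (w : W) (p : W × ℤˣ) :
    cs.signRep w p = (w * p.1 * w⁻¹, η w p.1 * p.2) := by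
  induction w using cs.simple_induction_left generalizing p with
  | one => simp [reflSign]
  | mul_simple_left w i ih =>
    rw [reflSign, map_mul, Equiv.Perm.mul_apply, Equiv.Perm.mul_apply, ih, ih, signRep_simple,
      simpleSignPerm_apply, simpleSignPerm_apply]
    ext
    · simp only [mul_inv_rev, cs.inv_simple, mul_assoc]
    · simp only [mul_one, mul_assoc]

theorem reflSign_mul (u v t : W) : η (u * v) t = η v t * η u (v * t * v⁻¹) := by
  have h := congrArg Prod.snd (congrFun (congrArg DFunLike.coe (map_mul cs.signRep u v)) (t, 1))
  simp only [Equiv.Perm.mul_apply, signRep_apply, mul_one] at h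
  rw [h, mul_comm]

@[simp] theorem reflSign_one (t : W) : η 1 t = 1 := by
  simp [reflSign]

theorem reflSign_inv (w t : W) : η w⁻¹ t = η w (w⁻¹ * t * w) := by
  have h := reflSign_mul cs w w⁻¹ t
  rw [mul_inv_cancel, reflSign_one, inv_inv] at h
  rw [mul_eq_one_iff_eq_inv.mp h.symm, Int.units_inv_eq_self]

theorem reflSign_conj (w x r : W) :
    η (w * x * w⁻¹) r = η w (w⁻¹ * r * w) * η x (w⁻¹ * r * w) * η w (x * (w⁻¹ * r * w) * x⁻¹) := by
  rw [reflSign_mul, reflSign_mul, reflSign_inv, inv_inv]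
  exact (mul_assoc _ _ _).symm

theorem reflSign_self {t : W} (ht : cs.IsReflection t) : η t t = -1 := by
  obtain ⟨w, i, rfl⟩ := ht
  have hs : w⁻¹ * (w * s i * w⁻¹) * w = s i := by group
  rw [reflSign_conj, hs, cs.inv_simple, cs.simple_mul_simple_cancel_right, reflSign_simple,
    if_pos rfl, mul_right_comm, Int.units_mul_self, one_mul]

theorem reflSign_apply_conj (w v x : W) : η w (v * x * v⁻¹) = η (w * v) x * η v x := by
  rw [reflSign_mul, mul_comm, ← mul_assoc, Int.units_mul_self, one_mul]

theorem reflSign_apply_conj_self {t : W} (ht : cs.IsReflection t) (r : W) :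
    η t (t * r * t) = η t r := by
  simpa only [ht.inv] using (reflSign_inv cs t r).symm

theorem eq_of_conj_eq_of_reflSign {t r : W} (ht : cs.IsReflection t) (hfix : t * r * t = r)
    (h : η t r = -1) : r = t := by
  obtain ⟨w, i, rfl⟩ := ht
  have hs : s i * (w⁻¹ * r * w) * (s i)⁻¹ = w⁻¹ * r * w := by
    conv_rhs => rw [← hfix]
    rw [cs.inv_simple]
    group
  rw [reflSign_conj, hs, mul_right_comm, Int.units_mul_self, one_mul, reflSign_simple] at h
  split_ifs at h with hr
  · rw [← hr]
    group
  · exact absurd h (by decide)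

theorem mem_rightInvSeq_of_reflSign_ne_one {ω : List B} {t : W} (h : η (π ω) t ≠ 1) :
    t ∈ cs.rightInvSeq ω := by
  induction ω with
  | nil => simp [wordProd] at h
  | cons i ω ih =>
    show t ∈ ((π ω)⁻¹ * s i * π ω) :: cs.rightInvSeq ω
    rw [wordProd_cons, reflSign_mul, reflSign_simple] at h
    by_cases ht : t = (π ω)⁻¹ * s i * π ω
    · exact ht ▸ List.mem_cons_self
    · rw [if_neg (by rwa [conj_eq_iff_eq_conj]), mul_one] at h
      exact List.mem_cons_of_mem _ (ih h)

theorem length_mul_lt_of_reflSign_eq_neg_one {w t : W} (h : η w t = -1) : ℓ (w * t) < ℓ w := by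
  obtain ⟨ω, hω, rfl⟩ := cs.exists_isReduced w
  have hmem := cs.mem_rightInvSeq_of_reflSign_ne_one (ω := ω) (t := t) (by rw [h]; decide)
  exact (cs.isRightInversion_of_mem_rightInvSeq hω hmem).2

theorem reflSign_eq_neg_one_iff {t : W} (ht : cs.IsReflection t) (w : W) :
    η w t = -1 ↔ ℓ (w * t) < ℓ w := by
  refine ⟨cs.length_mul_lt_of_reflSign_eq_neg_one, fun hlt => ?_⟩
  have h : η (w * t) t = -η w t := by
    rw [reflSign_mul, reflSign_self cs ht, ht.mul_self, one_mul, ht.inv, neg_one_mul]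
  rcases Int.units_eq_one_or (η w t) with h₁ | h₁
  · rw [h₁] at h
    have := cs.length_mul_lt_of_reflSign_eq_neg_one h
    rw [mul_assoc, ht.mul_self, mul_one] at this
    omega
  · exact h₁

theorem reflSign_eq_one_iff {t : W} (ht : cs.IsReflection t) (w : W) :
    η w t = 1 ↔ ℓ w < ℓ (w * t) := by
  rw [← not_iff_not, ← Ne, Int.units_ne_iff_eq_neg, reflSign_eq_neg_one_iff cs ht]
  have := ht.length_mul_left_ne w
  omega

theorem exists_eq_append_cons_of_mem_rightInvSeq {ω : List B} {t : W}
    (ht : t ∈ cs.rightInvSeq ω) :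
    ∃ ω₁ i ω₂, ω = ω₁ ++ i :: ω₂ ∧ t = (π ω₂)⁻¹ * s i * π ω₂ := by
  induction ω with
  | nil => simp [rightInvSeq] at ht
  | cons j ω ih =>
    rcases List.mem_cons.mp ht with rfl | ht
    · exact ⟨[], j, ω, rfl, rfl⟩
    · obtain ⟨ω₁, i, ω₂, rfl, rfl⟩ := ih ht
      exact ⟨j :: ω₁, i, ω₂, rfl, rfl⟩

theorem length_conj_le (v x : W) : ℓ (v * x * v⁻¹) ≤ 2 * ℓ v + ℓ x := by
  have h₁ := cs.length_mul_le (v * x) v⁻¹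
  have h₂ := cs.length_mul_le v x
  rw [length_inv] at h₁
  omega

/-- Every reflection has a palindromic reduced expression. -/
theorem exists_eq_conj_simple_length_eq {t : W} (ht : cs.IsReflection t) :
    ∃ v i, t = v * s i * v⁻¹ ∧ ℓ t = 2 * ℓ v + 1 := by
  obtain ⟨ω, hω, rfl⟩ := cs.exists_isReduced t
  have hmem := cs.mem_rightInvSeq_of_reflSign_ne_one (ω := ω) (t := π ω)
    (by rw [reflSign_self cs ht]; decide)
  obtain ⟨ω₁, i, ω₂, rfl, ht⟩ := cs.exists_eq_append_cons_of_mem_rightInvSeq hmem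
  have hω₁ : π ω₁ = (π ω₂)⁻¹ := by
    rw [wordProd_append, wordProd_cons, ← mul_assoc] at ht
    exact mul_right_cancel (mul_right_cancel ht)
  refine ⟨(π ω₂)⁻¹, i, by rw [ht, inv_inv], ?_⟩
  have h₁ := cs.length_wordProd_le ω₁
  have h₂ := cs.length_wordProd_le ω₂
  have h₃ := cs.length_conj_le (π ω₂)⁻¹ (s i)
  rw [hω.eq, List.length_append, List.length_cons]
  rw [hω₁, length_inv] at h₁
  rw [inv_inv, ← ht, hω.eq, List.length_append, List.length_cons, length_simple,
    length_inv] at h₃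
  rw [length_inv]
  omega

theorem length_conj_lt_of_reflSign_eq_neg_one {v y : W} (h : η v y = -1) :
    ℓ (v * y * v⁻¹) < 2 * ℓ v := by
  have h₁ := cs.length_mul_le (v * y) v⁻¹
  have h₂ := cs.length_mul_lt_of_reflSign_eq_neg_one h
  rw [length_inv] at h₁
  omega

/-- Writing `t = v * s i * v⁻¹` palindromically, one of `r` and `t * r * t` is `v * y * v⁻¹` for
a right inversion `y` of `v`. -/
theorem length_add_two_le_or_of_reflSign_eq_neg_one {t r : W} (ht : cs.IsReflection t)
    (h : η t r = -1) (hrt : r ≠ t) : ℓ r + 2 ≤ ℓ t ∨ ℓ (t * r * t) + 2 ≤ ℓ t := by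
  obtain ⟨v, i, rfl, hlen⟩ := cs.exists_eq_conj_simple_length_eq ht
  set r' := v⁻¹ * r * v
  have hr' : η (s i) r' = 1 := by
    rw [reflSign_simple, if_neg]
    rintro hr
    exact hrt (by rw [← hr]; simp only [r']; group)
  rw [reflSign_conj, hr', mul_one] at h
  rcases Int.units_eq_one_or (η v r') with h₁ | h₁
  · right
    rw [h₁, one_mul] at h
    have := cs.length_conj_lt_of_reflSign_eq_neg_one h
    have e : v * (s i * r' * (s i)⁻¹) * v⁻¹ = v * s i * v⁻¹ * r * (v * s i * v⁻¹) := by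
      simp only [r', cs.inv_simple]; group
    rw [e] at this
    omega
  · left
    have := cs.length_conj_lt_of_reflSign_eq_neg_one h₁
    have e : v * r' * v⁻¹ = r := by simp only [r']; group
    rw [e] at this
    omega

theorem reflSign_conj_conj_eq_neg_one {t r : W} (hr : cs.IsReflection r) (ht : cs.IsReflection t)
    (h₁ : η t r = -1) (h₂ : η r (t * r * t) = -1) (hlen : ℓ r ≤ ℓ (t * r * t)) :
    η t (r * (t * r * t) * r) = -1 := by
  have h₃ : η (t * r * t) r = -1 := by
    rw [reflSign_eq_neg_one_iff cs hr]
    have hlt := cs.length_mul_lt_of_reflSign_eq_neg_one h₂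
    have e : (r * (t * r * t))⁻¹ = t * r * t * r := by
      simp only [mul_inv_rev, hr.inv, ht.inv, mul_assoc]
    rw [← e, length_inv]
    omega
  calc η t (r * (t * r * t) * r)
      = η (t * r) (t * r * t) * η r (t * r * t) := by
        simpa only [hr.inv] using reflSign_apply_conj cs t r (t * r * t)
    _ = η (t * r * t) r * η t r * η r (t * r * t) := by
        simpa only [ht.inv] using
          congrArg (· * η r (t * r * t)) (reflSign_apply_conj cs (t * r) t r)
    _ = -1 := by rw [h₁, h₂, h₃]; decide

section ReflectionSubgroup

variable (N : Subgroup W)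

def reflectionsIn : Set W := {t | cs.IsReflection t ∧ t ∈ N}

/-- Dyer's canonical generators of the reflection subgroup generated by `reflectionsIn N`. -/
def canonicalGenerators : Set W :=
  {t | t ∈ cs.reflectionsIn N ∧ ∀ r ∈ cs.reflectionsIn N, η t r = -1 → r = t}

variable {N}

theorem conj_mem_reflectionsIn {r n : W} (hr : r ∈ cs.reflectionsIn N) (hn : n ∈ N) :
    n * r * n⁻¹ ∈ cs.reflectionsIn N :=
  ⟨hr.1.conj n, N.mul_mem (N.mul_mem hn hr.2) (N.inv_mem hn)⟩

theorem exists_shorter_of_notMem_canonicalGenerators {t : W} (ht : t ∈ cs.reflectionsIn N)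
    (hχ : t ∉ cs.canonicalGenerators N) :
    ∃ r ∈ cs.reflectionsIn N, ℓ r < ℓ t ∧ ℓ (r * t * r) < ℓ t := by
  set D := {r | r ∈ cs.reflectionsIn N ∧ η t r = -1 ∧ r ≠ t}
  have hD : D.Nonempty := by
    simp only [canonicalGenerators, Set.mem_ofPred_eq, not_and, not_forall] at hχ
    obtain ⟨r, hr, h, hrt⟩ := hχ ht
    exact ⟨r, hr, h, hrt⟩
  obtain ⟨r, ⟨hr, hr₁, hrt⟩, hmin⟩ := (measure cs.length).wf.has_min D hD
  have htrt : t * r * t ∈ D := by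
    refine ⟨by simpa only [ht.1.inv] using cs.conj_mem_reflectionsIn hr ht.2,
      by rw [reflSign_apply_conj_self cs ht.1, hr₁], fun h => hrt ?_⟩
    rw [ht.1.conj_eq_iff.mp h, ht.1.mul_self, one_mul]
  have hmin' : ∀ x ∈ D, ℓ r ≤ ℓ x := fun x hx => not_lt.mp (hmin x hx)
  have hfix : t * r * t ≠ r := fun h => hrt (cs.eq_of_conj_eq_of_reflSign ht.1 h hr₁)
  have hle := hmin' _ htrt
  have hshort : ℓ r + 2 ≤ ℓ t :=
    (cs.length_add_two_le_or_of_reflSign_eq_neg_one ht.1 hr₁ hrt).elim id fun h => by omega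
  -- otherwise `r * (t * r * t) * r` would be a shorter element of `D`
  have hgood : η r (t * r * t) = 1 := by
    refine (Int.units_eq_one_or _).resolve_right fun h => ?_
    rcases cs.length_add_two_le_or_of_reflSign_eq_neg_one hr.1 h hfix with h' | h'
    · omega
    · have hz : r * (t * r * t) * r ∈ D := by
        refine ⟨?_, cs.reflSign_conj_conj_eq_neg_one hr.1 ht.1 hr₁ h hle, ?_⟩
        · simpa only [hr.1.inv] using cs.conj_mem_reflectionsIn htrt.1 hr.2
        · rintro hzt
          rw [hzt] at h'
          omega
      have := hmin' _ hz
      omega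
  have h₁ : η (r * t) r = -1 := by
    rw [reflSign_mul, hr₁, ht.1.inv, hgood]
    rfl
  have h₂ : ℓ (r * t) = ℓ (t * r) := by
    rw [← length_inv, mul_inv_rev, ht.1.inv, hr.1.inv]
  have := cs.length_mul_lt_of_reflSign_eq_neg_one h₁
  have := cs.length_mul_lt_of_reflSign_eq_neg_one hr₁
  exact ⟨r, hr, by omega, by omega⟩

theorem mem_closure_canonicalGenerators {t : W} (ht : t ∈ cs.reflectionsIn N) :
    t ∈ Subgroup.closure (cs.canonicalGenerators N) := by
  induction hn : ℓ t using Nat.strong_induction_on generalizing t with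
  | _ n ih =>
  by_cases hχ : t ∈ cs.canonicalGenerators N
  · exact Subgroup.subset_closure hχ
  obtain ⟨r, hr, hrt, hrtr⟩ := cs.exists_shorter_of_notMem_canonicalGenerators ht hχ
  have hrtr_mem : r * t * r ∈ cs.reflectionsIn N := by
    simpa only [hr.1.inv] using cs.conj_mem_reflectionsIn ht hr.2
  have e : t = r * (r * t * r) * r := by
    rw [← mul_assoc, ← mul_assoc, hr.1.mul_self, one_mul, mul_assoc, hr.1.mul_self, mul_one]
  rw [e]
  have hr_mem := ih _ (hn ▸ hrt) hr rfl
  exact mul_mem (mul_mem hr_mem (ih _ (hn ▸ hrtr) hrtr_mem rfl)) hr_mem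

theorem inv_canonicalGenerators : (cs.canonicalGenerators N)⁻¹ = cs.canonicalGenerators N := by
  ext x
  rw [Set.mem_inv]
  constructor <;> intro h
  · have hx := h.1.1.inv
    rw [inv_inv] at hx
    rwa [← hx] at h
  · rwa [h.1.1.inv]

/-- The strong exchange property for words in the canonical generators. -/
theorem exists_prod_mul_eq_prod_eraseIdx {l : List W}
    (hl : ∀ x ∈ l, x ∈ cs.canonicalGenerators N) {p : W} (hp : p ∈ cs.reflectionsIn N)
    (h : η l.prod p = -1) :
    ∃ j < l.length, l.prod * p = (l.eraseIdx j).prod := by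
  induction l with
  | nil => simp at h
  | cons x l ih =>
    have hx := hl x List.mem_cons_self
    have hl' : ∀ y ∈ l, y ∈ cs.canonicalGenerators N := fun y hy =>
      hl y (List.mem_cons_of_mem x hy)
    have hq : l.prod * p * l.prod⁻¹ ∈ cs.reflectionsIn N :=
      cs.conj_mem_reflectionsIn hp (N.list_prod_mem fun y hy => (hl' y hy).1.2)
    rw [List.prod_cons, reflSign_mul] at h
    rcases Int.units_eq_one_or (η x (l.prod * p * l.prod⁻¹)) with h₁ | h₁
    · rw [h₁, mul_one] at h
      obtain ⟨j, hj, hje⟩ := ih hl' h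
      refine ⟨j + 1, Nat.succ_lt_succ hj, ?_⟩
      rw [List.prod_cons, List.eraseIdx_cons_succ, List.prod_cons, mul_assoc, hje]
    · refine ⟨0, Nat.succ_pos _, ?_⟩
      rw [List.prod_cons, List.eraseIdx_cons_zero, ← hx.2 _ hq h₁, inv_mul_cancel_right,
        mul_assoc, hp.1.mul_self, mul_one]

theorem exists_reflSign_prod_eq_neg_one {l : List W}
    (hl : ∀ x ∈ l, x ∈ cs.canonicalGenerators N) (h₁ : l.prod ≠ 1) :
    ∃ t ∈ cs.reflectionsIn N, η l.prod t = -1 := by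
  induction hn : l.length using Nat.strong_induction_on generalizing l with
  | _ n ih =>
  obtain rfl | ⟨l, x, rfl⟩ := l.eq_nil_or_concat'
  · simp at h₁
  have hx := hl x (by simp)
  have hl' : ∀ y ∈ l, y ∈ cs.canonicalGenerators N := fun y hy => hl y (by simp [hy])
  rw [List.prod_append, List.prod_singleton] at h₁ ⊢
  have hsign : η (l.prod * x) x = -η l.prod x := by
    rw [reflSign_mul, reflSign_self cs hx.1.1, hx.1.1.mul_self, one_mul, hx.1.1.inv, neg_one_mul]
  rcases Int.units_eq_one_or (η l.prod x) with h | h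
  · exact ⟨x, hx.1, by rw [hsign, h]⟩
  · obtain ⟨j, hj, hje⟩ := cs.exists_prod_mul_eq_prod_eraseIdx hl' hx.1 h
    rw [hje] at h₁ ⊢
    refine ih _ ?_ (fun y hy => hl' y (List.mem_of_mem_eraseIdx hy)) h₁ rfl
    rw [← hn, List.length_append, List.length_eraseIdx_of_lt hj]
    simp

theorem exists_reflSign_eq_neg_one (hN : N = Subgroup.closure (cs.reflectionsIn N)) {n : W}
    (hn : n ∈ N) (h₁ : n ≠ 1) : ∃ t ∈ cs.reflectionsIn N, η n t = -1 := by
  have hn' : n ∈ Submonoid.closure (cs.canonicalGenerators N) := by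
    have hle :
        Subgroup.closure (cs.reflectionsIn N) ≤ Subgroup.closure (cs.canonicalGenerators N) :=
      (Subgroup.closure_le _).mpr fun t ht => cs.mem_closure_canonicalGenerators ht
    have : n ∈ (Subgroup.closure (cs.canonicalGenerators N)).toSubmonoid := hle (hN ▸ hn)
    rwa [Subgroup.closure_toSubmonoid, inv_canonicalGenerators, Set.union_self] at this
  obtain ⟨l, hl, rfl⟩ := Submonoid.exists_list_of_mem_closure hn'
  exact cs.exists_reflSign_prod_eq_neg_one hl h₁

end ReflectionSubgroup

theorem eq_or_length_lt_of_bruhatLE {u v : W} (h : bruhatLE cs u v) : u = v ∨ ℓ u < ℓ v := by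
  induction h with
  | refl => exact .inl rfl
  | tail _ hstep ih =>
    obtain ⟨t, -, rfl, hlt⟩ := hstep
    rcases ih with rfl | h
    · exact .inr hlt
    · exact .inr (h.trans hlt)

theorem bruhatLE_antisymm {u v : W} (huv : bruhatLE cs u v) (hvu : bruhatLE cs v u) : u = v := by
  rcases cs.eq_or_length_lt_of_bruhatLE huv with h | h
  · exact h
  rcases cs.eq_or_length_lt_of_bruhatLE hvu with h' | h'
  · exact h'.symm
  omega

section Coset

variable {N : Subgroup W}

theorem eq_of_forall_reflSign_eq (hN : N = Subgroup.closure (cs.reflectionsIn N)) {u v : W}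
    (huv : (u : W ⧸ N) = v) (ε : ℤˣ) (hu : ∀ t ∈ cs.reflectionsIn N, η u t = ε)
    (hv : ∀ t ∈ cs.reflectionsIn N, η v t = ε) : u = v := by
  rw [QuotientGroup.eq] at huv
  by_contra hne
  obtain ⟨t, ht, h⟩ := cs.exists_reflSign_eq_neg_one hN huv (by rwa [Ne, inv_mul_eq_one])
  have e := reflSign_mul cs u (u⁻¹ * v) t
  rw [mul_inv_cancel_left, hv t ht, h, hu _ (cs.conj_mem_reflectionsIn ht huv)] at e
  rcases Int.units_eq_one_or ε with rfl | rfl <;> exact absurd e (by decide)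

variable (N)

theorem exists_bruhatLE_forall_reflSign_eq_one (u : W) :
    ∃ v : W, (v : W ⧸ N) = u ∧ bruhatLE cs v u ∧ ∀ t ∈ cs.reflectionsIn N, η v t = 1 := by
  obtain ⟨v, ⟨hvu, hle⟩, hmin⟩ := (measure cs.length).wf.has_min
    {v : W | (v : W ⧸ N) = u ∧ bruhatLE cs v u} ⟨u, rfl, .refl⟩
  refine ⟨v, hvu, hle, fun t ht => (Int.units_eq_one_or _).resolve_right fun h => ?_⟩
  have hlt := cs.length_mul_lt_of_reflSign_eq_neg_one h
  refine hmin (v * t) ⟨(QuotientGroup.mk_mul_of_mem v ht.2).trans hvu, .head ?_ hle⟩ hlt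
  exact ⟨t, ht.1, by rw [mul_assoc, ht.1.mul_self, mul_one], hlt⟩

theorem exists_bruhatLE_forall_reflSign_eq_neg_one [Finite W] (u : W) :
    ∃ v : W, (v : W ⧸ N) = u ∧ bruhatLE cs u v ∧ ∀ t ∈ cs.reflectionsIn N, η v t = -1 := by
  obtain ⟨v, ⟨hvu, hle⟩, hmax⟩ := Set.exists_max_image
    {v : W | (v : W ⧸ N) = u ∧ bruhatLE cs u v} cs.length (Set.toFinite _) ⟨u, rfl, .refl⟩
  refine ⟨v, hvu, hle, fun t ht => (Int.units_eq_one_or _).resolve_left fun h => ?_⟩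
  have hlt := (reflSign_eq_one_iff cs ht.1 v).mp h
  have := hmax (v * t)
    ⟨(QuotientGroup.mk_mul_of_mem v ht.2).trans hvu, hle.tail ⟨t, ht.1, rfl, hlt⟩⟩
  omega

variable {N}

theorem exists_bruhat_least_in_coset (hN : N = Subgroup.closure (cs.reflectionsIn N)) (u : W) :
    ∃ a : W, (a : W ⧸ N) = u ∧ ∀ b : W, (b : W ⧸ N) = u → bruhatLE cs a b := by
  obtain ⟨a, hau, -, ha⟩ := cs.exists_bruhatLE_forall_reflSign_eq_one N u
  refine ⟨a, hau, fun b hbu => ?_⟩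
  obtain ⟨b₀, hb₀, hle, hb₀'⟩ := cs.exists_bruhatLE_forall_reflSign_eq_one N b
  rwa [cs.eq_of_forall_reflSign_eq hN ((hau.trans hbu.symm).trans hb₀.symm) 1 ha hb₀']

theorem exists_bruhat_greatest_in_coset [Finite W]
    (hN : N = Subgroup.closure (cs.reflectionsIn N)) (u : W) :
    ∃ a : W, (a : W ⧸ N) = u ∧ ∀ b : W, (b : W ⧸ N) = u → bruhatLE cs b a := by
  obtain ⟨a, hau, -, ha⟩ := cs.exists_bruhatLE_forall_reflSign_eq_neg_one N u
  refine ⟨a, hau, fun b hbu => ?_⟩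
  obtain ⟨b₁, hb₁, hle, hb₁'⟩ := cs.exists_bruhatLE_forall_reflSign_eq_neg_one N b
  rwa [cs.eq_of_forall_reflSign_eq hN ((hau.trans hbu.symm).trans hb₁.symm) (-1) ha hb₁']

end Coset

end CoxeterSystem

/-- Let `W` be a (finite) Coxeter group, `N` a reflection subgroup of `W`
(such as `W_{s'}°`), and `β = w·N` a coset of `N` (a block inside a transporter).  Then
`β`, with the Bruhat order induced from `W`, has a unique minimal element `w_β` and a
unique maximal element `w^β`. -/
theorem stmt12 {B W : Type*} [Group W] [Finite W] {M : CoxeterMatrix B}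
    (cs : CoxeterSystem M W)
    (N : Subgroup W)
    -- `N` is a reflection subgroup: it is generated by the reflections it contains
    (hN : N = Subgroup.closure {t : W | cs.IsReflection t ∧ t ∈ N})
    (w : W) :
    -- unique Bruhat-minimal element of the block `β = w·N`
    (∃! a : W, (∃ n ∈ N, a = w * n) ∧
      ∀ b : W, (∃ n ∈ N, b = w * n) → bruhatLE cs a b) ∧
    -- unique Bruhat-maximal element of the block `β = w·N`
    (∃! a : W, (∃ n ∈ N, a = w * n) ∧
      ∀ b : W, (∃ n ∈ N, b = w * n) → bruhatLE cs b a) := by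
  have hcoset : ∀ b, (∃ n ∈ N, b = w * n) ↔ (b : W ⧸ N) = w := fun b => by
    rw [eq_comm, QuotientGroup.eq]
    exact ⟨by rintro ⟨n, hn, rfl⟩; simpa, fun h => ⟨_, h, (mul_inv_cancel_left w b).symm⟩⟩
  simp only [hcoset]
  obtain ⟨a, ha, hmin⟩ := cs.exists_bruhat_least_in_coset hN w
  obtain ⟨c, hc, hmax⟩ := cs.exists_bruhat_greatest_in_coset hN w
  exact ⟨⟨a, ⟨ha, hmin⟩, fun a' h => cs.bruhatLE_antisymm (h.2 a ha) (hmin a' h.1)⟩,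
    ⟨c, ⟨hc, hmax⟩, fun c' h => cs.bruhatLE_antisymm (hmax c' h.1) (h.2 c hc)⟩⟩
end
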